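/- For every σ ∈ S_n, (Inv, Rmil, Lmap, Lmil)(σ) = (Sor, Cyc, Lmap, Lmic1)(φ(σ)); that is, Inv(σ) = Sor(φ(σ)), Rmil(σ) = Cyc(φ(σ)), Lmap(σ) = Lmap(φ(σ)), and Lmil(σ) = Lmic1(φ(σ)). -/

import Mathlib

open scoped Classical

namespace SortIdx

variable {n : ℕ}

noncomputable section

/-- The inversion number `inv σ := #{(i,j) : i < j ∧ σ i > σ j}`. -/
def inv (σ : Equiv.Perm (Fin n)) : ℕ :=
  (Finset.univ.filter (fun p : Fin n × Fin n => p.1 < p.2 ∧ σ p.2 < σ p.1)).card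

/-- The inversion set `Inv σ := {(i,j) : i < j ∧ σ i > σ j}`. -/
def InvSet (σ : Equiv.Perm (Fin n)) : Finset (Fin n × Fin n) :=
  Finset.univ.filter (fun p : Fin n × Fin n => p.1 < p.2 ∧ σ p.2 < σ p.1)

/-- Right-to-left minimum letters. -/
def RmilSet (σ : Equiv.Perm (Fin n)) : Finset (Fin n) :=
  (Finset.univ.filter (fun i => ∀ j, i < j → σ i < σ j)).image σ

/-- The number of right-to-left minima. -/
def rmin (σ : Equiv.Perm (Fin n)) : ℕ := (RmilSet σ).card

/-- Right-to-left minimum places. -/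
def RmipSet (σ : Equiv.Perm (Fin n)) : Finset (Fin n) :=
  Finset.univ.filter (fun i => ∀ j, i < j → σ i < σ j)

/-- Right-to-left maximum letters. -/
def RmalSet (σ : Equiv.Perm (Fin n)) : Finset (Fin n) :=
  (Finset.univ.filter (fun i => ∀ j, i < j → σ j < σ i)).image σ

/-- The number of right-to-left maxima. -/
def rmax (σ : Equiv.Perm (Fin n)) : ℕ := (RmalSet σ).card

/-- Left-to-right minimum letters. -/
def LmilSet (σ : Equiv.Perm (Fin n)) : Finset (Fin n) :=
  (Finset.univ.filter (fun i => ∀ j, j < i → σ i < σ j)).image σ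

/-- The number of left-to-right minima. -/
def lmin (σ : Equiv.Perm (Fin n)) : ℕ := (LmilSet σ).card

/-- Left-to-right minimum places. -/
def LmipSet (σ : Equiv.Perm (Fin n)) : Finset (Fin n) :=
  Finset.univ.filter (fun i => ∀ j, j < i → σ i < σ j)

/-- Left-to-right maximum letters. -/
def LmalSet (σ : Equiv.Perm (Fin n)) : Finset (Fin n) :=
  (Finset.univ.filter (fun i => ∀ j, j < i → σ j < σ i)).image σ

/-- The number of left-to-right maxima. -/
def lmax (σ : Equiv.Perm (Fin n)) : ℕ := (LmalSet σ).card

/-- Left-to-right maximum places. -/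
def LmapSet (σ : Equiv.Perm (Fin n)) : Finset (Fin n) :=
  Finset.univ.filter (fun i => ∀ j, j < i → σ j < σ i)

/-- `Cyc σ`: the set of smallest elements of the cycles of `σ`
(`i` is smallest in its cycle iff `i ≤ σ^k i` for all `k`). -/
def CycSet (σ : Equiv.Perm (Fin n)) : Finset (Fin n) :=
  Finset.univ.filter (fun i => ∀ k : ℕ, i ≤ (σ ^ k) i)

/-- The number of cycles of `σ` (fixed points included). -/
def cyc (σ : Equiv.Perm (Fin n)) : ℕ := (CycSet σ).card

/-- One step of the sorting process computing the sorting index: repeatedly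
put the largest not-yet-fixed letter `j` in its place by the transposition
`(i j)` where `i = σ⁻¹ j` is the place of the letter `j`, recording the
distance `j - i`.  This produces the unique factorization
`σ = (i₁ j₁)(i₂ j₂)⋯(i_k j_k)` with `j₁ < ⋯ < j_k`, `i_r < j_r`, and sums
the `j_r - i_r`.  The fuel `n` is always sufficient. -/
def sorAux : ℕ → Equiv.Perm (Fin n) → ℕ
  | 0, _ => 0
  | (fuel + 1), σ =>
    if h : σ.support.Nonempty then
      (((σ.support.max' h : Fin n) : ℕ) - ((σ⁻¹ (σ.support.max' h) : Fin n) : ℕ)) +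
        sorAux fuel (σ * Equiv.swap (σ⁻¹ (σ.support.max' h)) (σ.support.max' h))
    else 0

/-- The sorting index of Petersen. -/
def sor (σ : Equiv.Perm (Fin n)) : ℕ := sorAux n σ

theorem bcode_exists (σ : Equiv.Perm (Fin n)) (i : Fin n) :
    ∃ k : ℕ, 0 < k ∧ (σ⁻¹ ^ k) i ≤ i := by
  refine ⟨orderOf σ⁻¹, orderOf_pos σ⁻¹, ?_⟩
  rw [pow_orderOf_eq_one]
  simp

/-- The `B`-code of `σ`: `Bcode σ i = σ^(-k) i` where `k ≥ 1` is minimal with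
`σ^(-k) i ≤ i`. -/
def Bcode (σ : Equiv.Perm (Fin n)) (i : Fin n) : Fin n :=
  (σ⁻¹ ^ (Nat.find (bcode_exists σ i))) i

/-- The `B`-code as a sequence in `L_n` (1-indexed values: the entry at place
`i` is the 1-indexed name of the letter `Bcode σ i`). -/
def BcodeNat (σ : Equiv.Perm (Fin n)) : Fin n → ℕ :=
  fun i => ((Bcode σ i : Fin n) : ℕ) + 1

/-- The Lehmer code: `Leh σ i = #{j : j ≤ i ∧ σ j ≤ σ i}` (1-indexed values). -/
def Leh (σ : Equiv.Perm (Fin n)) : Fin n → ℕ :=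
  fun i => (Finset.univ.filter (fun j => j ≤ i ∧ σ j ≤ σ i)).card

/-- The `A`-code: `A σ := Leh σ⁻¹`. -/
def Acode (σ : Equiv.Perm (Fin n)) : Fin n → ℕ := Leh σ⁻¹

/-- `O(code) := {i : code i = 1}` (for `1`-indexed codes in `L_n`). -/
def Oset (code : Fin n → ℕ) : Finset (Fin n) :=
  Finset.univ.filter (fun i => code i = 1)

/-- `Lmic1 σ := O(B σ)`, the set of places where the `B`-code equals `1`,
equivalently the left-to-right minima of the shifted cycle containing `1`. -/
def Lmic1Set (σ : Equiv.Perm (Fin n)) : Finset (Fin n) :=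
  Oset (BcodeNat σ)

/-- `lmic1 σ := #{i : (B σ)_i = 1}`. -/
def lmic1 (σ : Equiv.Perm (Fin n)) : ℕ := (Lmic1Set σ).card

/-- The bijection `φ = B⁻¹ ∘ A` of Foata–Han. -/
def phi (σ : Equiv.Perm (Fin n)) : Equiv.Perm (Fin n) :=
  Function.invFun BcodeNat (Acode σ)

/-- The algorithm computing the induced set of a code: the list argument is
the list of places still to process (from the last to the first), `S` is the
set of letters still available.  At place `i` we pick the `(code i)`-th
smallest element `l` of `S` (1-indexed), put the pairs `(l, j)` for `j ∈ S`,
`j > l` into the answer and remove `l` from `S`. -/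
def inducedAux : List (Fin n) → Finset (Fin n) → (Fin n → ℕ) → Finset (Fin n × Fin n)
  | [], _, _ => ∅
  | (i :: is), S, code =>
      ((S.filter (fun j => (S.sort (· ≤ ·)).getD (code i - 1) i < j)).image
          (fun j => ((S.sort (· ≤ ·)).getD (code i - 1) i, j))) ∪
        inducedAux is (S.erase ((S.sort (· ≤ ·)).getD (code i - 1) i)) code

/-- The induced set `⟨code⟩` of a code in `L_n`. -/
def induced (code : Fin n → ℕ) : Finset (Fin n × Fin n) :=
  inducedAux (List.finRange n).reverse Finset.univ code

/-- The sorting set `Sor σ := ⟨B σ⟩`. -/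
def SorSet (σ : Equiv.Perm (Fin n)) : Finset (Fin n × Fin n) :=
  induced (BcodeNat σ)

/-- The descent set (as a set of places `i`, `0`-indexed, such that
`σ i > σ (i+1)`). -/
def DesSet (σ : Equiv.Perm (Fin n)) : Finset (Fin n) :=
  Finset.univ.filter (fun i => ∃ h : (i : ℕ) + 1 < n, σ ⟨(i : ℕ) + 1, h⟩ < σ i)

/-- The major index (descents being counted `1`-indexed). -/
def maj (σ : Equiv.Perm (Fin n)) : ℕ :=
  ∑ i ∈ DesSet σ, ((i : ℕ) + 1)

/-- The charge `chg σ := ∑_{i ∈ Des σ⁻¹} (n - i)` (descents `1`-indexed). -/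
def chg (σ : Equiv.Perm (Fin n)) : ℕ :=
  ∑ i ∈ DesSet σ⁻¹, (n - ((i : ℕ) + 1))

/-- The reverse-complement of `σ` : `τ i = n + 1 - σ (n + 1 - i)` (1-indexed). -/
def revcomp (σ : Equiv.Perm (Fin n)) : Equiv.Perm (Fin n) :=
  Fin.revPerm * σ * Fin.revPerm

/-- The reverse major index `rmaj σ := maj (revcomp σ)`. -/
def rmaj (σ : Equiv.Perm (Fin n)) : ℕ := maj (revcomp σ)

end

end SortIdx

/-!
Every statistic on the left is read off the `A`-code of `σ`, and the corresponding statistic on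
the right off the `B`-code of `φ σ` by the same recipe; since `B (φ σ) = A σ`, the two sides agree.
For a code `c` the recipes are: `Rmil`/`Cyc` are the `i` with `c i = i + 1`, `Lmil`/`Lmic1` those
with `c i = 1`, `Inv`/`Sor` the induced set `⟨c⟩`, and `Lmap` the `i` such that the last entry of
`c` that is at most `i + 1` equals `i + 1`.

The `B`-code is inverted by the product of transpositions `(b₀ 0)(b₁ 1)⋯(b_{n-1} n-1)`:
multiplying by `(b m)` on the right, with `m` fixed so far, inserts `m` in front of `b` in its
cycle; backward orbits of letters `i < m` merely gain a detour through `m > i`, so their `B`-code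
entries do not change. In one-line notation the same step puts the maximal letter `m` at place `b`
and the displaced letter at the end, which is how `Lmap` is followed along the product.
-/

open Finset

theorem Function.exists_iterate_eq_iterate_of_forall {α : Type*} {f g : α → α} {p : α → Prop}
    {s : Set α} (hs : Set.MapsTo f s s)
    (hg : ∀ x ∈ s, ∃ r, 0 < r ∧ g^[r] x = f x ∧ ∀ j, 0 < j → j < r → ¬ p (g^[j] x))
    {k : ℕ} (hk : 0 < k) {x : α} (hx : x ∈ s) (hf : ∀ j, 0 < j → j < k → ¬ p (f^[j] x)) :
    ∃ k', 0 < k' ∧ g^[k'] x = f^[k] x ∧ ∀ j, 0 < j → j < k' → ¬ p (g^[j] x) := by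
  induction k, hk using Nat.le_induction generalizing x with
  | base => simpa using hg x hx
  | succ k hk ih =>
    obtain ⟨r, hr, hgr, hgr_min⟩ := hg x hx
    obtain ⟨k', hk', hgk', hgk'_min⟩ :=
      ih (hs hx) fun j hj hjk => by
        rw [← iterate_succ_apply]; exact hf (j + 1) (by omega) (by omega)
    refine ⟨k' + r, by omega, by rw [iterate_add_apply, hgr, hgk', iterate_succ_apply], ?_⟩
    intro j hj hjk
    rcases lt_trichotomy j r with hjr | rfl | hjr
    · exact hgr_min j hj hjr
    · simpa [hgr] using hf 1 one_pos (by omega)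
    · obtain ⟨j, rfl⟩ := Nat.exists_eq_add_of_lt hjr
      rw [show r + j + 1 = (j + 1) + r by omega, iterate_add_apply, hgr]
      exact hgk'_min (j + 1) (by omega) (by omega)

theorem Equiv.Perm.apply_mem_iff_of_forall_notMem {α : Type*} {σ : Equiv.Perm α} {s : Set α}
    (h : ∀ x ∉ s, σ x = x) {x : α} : σ x ∈ s ↔ x ∈ s := by
  by_cases hx : x ∈ s
  · refine iff_of_true (by_contra fun hσx => ?_) hx
    exact hσx (by rwa [σ.injective (h _ hσx)])
  · rw [h x hx]

theorem Equiv.Perm.forall_lt_apply_iff {α : Type*} [LinearOrder α] {σ : Equiv.Perm α} {m : α}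
    {S : α → Prop} (hm : ¬ S (σ⁻¹ m)) : (∀ q, S q → m < σ q) ↔ ∀ j < m, ¬ S (σ⁻¹ j) := by
  refine ⟨fun h j hj hS => (h _ hS).not_gt (by simpa using hj), fun h q hq => ?_⟩
  refine lt_of_le_of_ne (not_lt.1 fun hlt => h _ hlt (by simpa using hq)) fun heq => hm ?_
  rw [heq]
  simpa using hq

theorem Equiv.Perm.forall_pow_apply_of_forall_inv_pow_apply {α : Type*} [Finite α]
    {σ : Equiv.Perm α} {p : α → Prop} {x : α} (h : ∀ k : ℕ, p ((σ⁻¹ ^ k) x)) (k : ℕ) :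
    p ((σ ^ k) x) := by
  obtain ⟨j, -, hj⟩ := (show σ⁻¹.SameCycle x ((σ ^ k) x) from ⟨-k, by simp⟩).exists_pow_eq'
  exact hj ▸ h j

theorem Finset.sort_getD_card_filter_lt {α : Type*} [LinearOrder α] {s : Finset α} {x : α}
    (hx : x ∈ s) (d : α) : (s.sort (· ≤ ·)).getD (s.filter (· < x)).card d = x := by
  set e := s.orderEmbOfFin rfl
  obtain ⟨j, rfl⟩ : ∃ j, e j = x := by
    rwa [← Set.mem_range, range_orderEmbOfFin]
  have hfilter : s.filter (· < e j) = (Iio j).map e.toEmbedding := by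
    ext y
    constructor
    · intro hy
      obtain ⟨hys, hyj⟩ := mem_filter.1 hy
      obtain ⟨i, rfl⟩ : ∃ i, e i = y := by rwa [← Set.mem_range, range_orderEmbOfFin]
      simpa using hyj
    · simp only [mem_map, mem_Iio, mem_filter]
      rintro ⟨i, hij, rfl⟩
      exact ⟨orderEmbOfFin_mem s rfl i, by simpa using hij⟩
  rw [hfilter, card_map, Fin.card_Iio, List.getD_eq_getElem _ _ (by simp), orderEmbOfFin_apply,
    Fin.getElem_fin]

namespace SortIdx

open Equiv

variable {n : ℕ}

theorem bcode_eq_of_pow {σ : Perm (Fin n)} {i v : Fin n} {k : ℕ} (hk : 0 < k)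
    (hkv : (σ⁻¹ ^ k) i = v) (hvi : v ≤ i) (hmin : ∀ j, 0 < j → j < k → i < (σ⁻¹ ^ j) i) :
    Bcode σ i = v := by
  have : Nat.find (bcode_exists σ i) = k :=
    (Nat.find_eq_iff _).2 ⟨⟨hk, hkv ▸ hvi⟩, fun j hjk ⟨hj, hle⟩ => (hmin j hj hjk).not_ge hle⟩
  rw [Bcode, this, hkv]

theorem bcode_le (σ : Perm (Fin n)) (i : Fin n) : Bcode σ i ≤ i :=
  (Nat.find_spec (bcode_exists σ i)).2

theorem exists_pow_eq_bcode (σ : Perm (Fin n)) (i : Fin n) :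
    ∃ k, 0 < k ∧ (σ⁻¹ ^ k) i = Bcode σ i ∧ ∀ j, 0 < j → j < k → i < (σ⁻¹ ^ j) i :=
  ⟨_, (Nat.find_spec (bcode_exists σ i)).1, rfl, fun _ hj hjk =>
    lt_of_not_ge fun hle => Nat.find_min (bcode_exists σ i) hjk ⟨hj, hle⟩⟩

theorem bcode_eq_inv_apply_of_le {σ : Perm (Fin n)} {i : Fin n} (h : σ⁻¹ i ≤ i) :
    Bcode σ i = σ⁻¹ i :=
  bcode_eq_of_pow one_pos (by rw [pow_one]) h fun _ hj hj1 => absurd hj1 (by omega)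

theorem bcode_eq_self_iff (σ : Perm (Fin n)) (i : Fin n) :
    Bcode σ i = i ↔ ∀ k : ℕ, i ≤ (σ ^ k) i := by
  obtain ⟨K, hK, hKb, hmin⟩ := exists_pow_eq_bcode σ i
  constructor
  · intro hb
    rw [hb] at hKb
    refine Perm.forall_pow_apply_of_forall_inv_pow_apply fun j => ?_
    have hmod : (σ⁻¹ ^ j) i = (σ⁻¹ ^ (j % K)) i := by
      conv_lhs => rw [← Nat.mod_add_div j K, pow_add, pow_mul, Perm.mul_apply,
        Perm.pow_apply_eq_self_of_apply_eq_self hKb]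
    rcases Nat.eq_zero_or_pos (j % K) with h0 | h0
    · rw [hmod, h0, pow_zero, Perm.one_apply]
    · exact hmod ▸ (hmin _ h0 (Nat.mod_lt j hK)).le
  · intro h
    refine le_antisymm (bcode_le σ i) (hKb ▸ ?_)
    simpa using Perm.forall_pow_apply_of_forall_inv_pow_apply (σ := σ⁻¹) (by simpa using h) K

theorem cycSet_eq_bcodeNat (τ : Perm (Fin n)) :
    CycSet τ = univ.filter fun i => BcodeNat τ i = i + 1 := by
  ext i
  simp only [CycSet, BcodeNat, mem_filter, mem_univ, true_and, ← bcode_eq_self_iff,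
    Fin.ext_iff, Nat.add_right_cancel_iff]

theorem bcode_mul_swap {σ : Perm (Fin n)} {b m i : Fin n} (hm : σ m = m) (him : i < m) :
    Bcode (σ * swap b m) i = Bcode σ i := by
  obtain ⟨k, hk, hkb, hmin⟩ := exists_pow_eq_bcode σ i
  have hσm : σ⁻¹ m = m := by rw [Perm.inv_eq_iff_eq, hm]
  have hinv : ∀ x, (σ * swap b m)⁻¹ x = swap b m (σ⁻¹ x) := fun x => by
    rw [mul_inv_rev, swap_inv, Perm.mul_apply]
  -- Each step of `σ⁻¹` off `m` is one step of `(σ * swap b m)⁻¹`, or two with a detour via `m > i`.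
  have hstep : ∀ x ∈ {x | x ≠ m}, ∃ r, 0 < r ∧ (⇑(σ * swap b m)⁻¹)^[r] x = σ⁻¹ x ∧
      ∀ j, 0 < j → j < r → ¬ (⇑(σ * swap b m)⁻¹)^[j] x ≤ i := by
    intro x hx
    by_cases hxb : σ⁻¹ x = b
    · refine ⟨2, two_pos, ?_, fun j hj hj2 => ?_⟩
      · show (σ * swap b m)⁻¹ ((σ * swap b m)⁻¹ x) = σ⁻¹ x
        rw [hinv, hinv, hxb, swap_apply_left, hσm, swap_apply_right]
      · obtain rfl : j = 1 := by omega
        rw [Function.iterate_one, hinv, hxb, swap_apply_left]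
        exact him.not_ge
    · refine ⟨1, one_pos, ?_, fun j hj hj1 => absurd hj1 (by omega)⟩
      rw [Function.iterate_one, hinv, swap_apply_of_ne_of_ne hxb]
      rw [Ne, Perm.inv_eq_iff_eq, hm]
      exact hx
  have hmaps : Set.MapsTo ⇑σ⁻¹ {x | x ≠ m} {x | x ≠ m} := fun x hx hσx =>
    hx (by rwa [Perm.inv_eq_iff_eq, hm] at hσx)
  obtain ⟨k', hk', hk'b, hk'min⟩ := Function.exists_iterate_eq_iterate_of_forall (p := (· ≤ i))
    hmaps hstep hk him.ne fun j hj hjk => (hmin j hj hjk).not_ge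
  exact bcode_eq_of_pow hk' (hk'b.trans hkb) (bcode_le σ i) fun j hj hjk =>
    lt_of_not_ge (hk'min j hj hjk)

def swapProd (d : Fin n → Fin n) : ℕ → Perm (Fin n)
  | 0 => 1
  | t + 1 => if h : t < n then swapProd d t * swap (d ⟨t, h⟩) ⟨t, h⟩ else swapProd d t

variable {d : Fin n → Fin n} {t : ℕ}

theorem swapProd_succ (d : Fin n → Fin n) (h : t < n) :
    swapProd d (t + 1) = swapProd d t * swap (d ⟨t, h⟩) ⟨t, h⟩ :=
  dif_pos h

theorem swapProd_apply_of_le (hd : ∀ i, d i ≤ i) (t : ℕ) {x : Fin n} (hx : t ≤ x) :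
    swapProd d t x = x := by
  induction t with
  | zero => rfl
  | succ t ih =>
    by_cases h : t < n
    · have hdt : (d ⟨t, h⟩ : ℕ) ≤ t := hd ⟨t, h⟩
      rw [swapProd_succ d h, Perm.mul_apply,
        swap_apply_of_ne_of_ne (Fin.ne_of_val_ne (by omega)) (Fin.ne_of_val_ne (by simp; omega)),
        ih (by omega)]
    · rw [swapProd, dif_neg h, ih (by omega)]

theorem swapProd_congr {d' : Fin n → Fin n} (h : ∀ i : Fin n, (i : ℕ) < t → d i = d' i) :
    swapProd d t = swapProd d' t := by
  induction t with
  | zero => rfl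
  | succ t ih =>
    simp only [swapProd]
    rw [ih fun i hi => h i (by omega)]
    split_ifs with ht
    · rw [h ⟨t, ht⟩ (by simp)]
    · rfl

theorem bcode_swapProd (hd : ∀ i, d i ≤ i) (ht : t ≤ n) (i : Fin n) :
    Bcode (swapProd d t) i = if (i : ℕ) < t then d i else i := by
  split_ifs with hi
  · induction t with
    | zero => omega
    | succ t ih =>
      have h : t < n := by omega
      rw [swapProd_succ d h]
      rcases Nat.lt_succ_iff_lt_or_eq.1 hi with hit | hit
      · rw [bcode_mul_swap (swapProd_apply_of_le hd t (x := ⟨t, h⟩) le_rfl) (Fin.lt_def.2 hit),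
          ih (by omega) hit]
      · rw [show (⟨t, h⟩ : Fin n) = i from Fin.ext hit.symm]
        have hfix : (swapProd d t)⁻¹ i = i :=
          Perm.inv_eq_iff_eq.2 (swapProd_apply_of_le hd t hit.ge).symm
        have hinv : (swapProd d t * swap (d i) i)⁻¹ i = d i := by
          rw [mul_inv_rev, swap_inv, Perm.mul_apply, hfix, swap_apply_right]
        rw [bcode_eq_inv_apply_of_le (by rw [hinv]; exact hd i), hinv]
  · have hfix : (swapProd d t)⁻¹ i = i :=
      Perm.inv_eq_iff_eq.2 (swapProd_apply_of_le hd t (by omega)).symm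
    rw [bcode_eq_inv_apply_of_le hfix.le, hfix]

theorem swapProd_bcode {τ : Perm (Fin n)} (ht : t ≤ n) (hτ : ∀ x : Fin n, t ≤ x → τ x = x) :
    swapProd (Bcode τ) t = τ := by
  induction t generalizing τ with
  | zero => ext x; simp [swapProd, hτ x]
  | succ t ih =>
    have h : t < n := by omega
    set m : Fin n := ⟨t, h⟩
    have hτinv : τ⁻¹ m ≤ m := by
      refine (Perm.apply_mem_iff_of_forall_notMem (s := Set.Iic m) fun x hx => ?_).2
        (Set.mem_Iic.2 le_rfl)
      simp only [Set.mem_Iic, not_le, Fin.lt_def] at hx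
      rw [Perm.inv_eq_iff_eq, hτ x hx]
    set τ' := τ * swap (τ⁻¹ m) m with hτ'
    have hτ'm : τ' m = m := by simp [τ']
    have hτ'fix : ∀ x : Fin n, t ≤ x → τ' x = x := by
      intro x hx
      rcases hx.lt_or_eq with hx | hx
      · have hmx : m < x := Fin.lt_def.2 hx
        rw [hτ', Perm.mul_apply, swap_apply_of_ne_of_ne (hτinv.trans_lt hmx).ne' hmx.ne',
          hτ x hx]
      · rwa [show x = m from Fin.ext hx.symm]
    have hτ_eq : τ' * swap (τ⁻¹ m) m = τ := by simp [τ', mul_assoc]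
    have hB : ∀ i : Fin n, (i : ℕ) < t → Bcode τ i = Bcode τ' i := fun i hi => by
      conv_lhs => rw [← hτ_eq]
      exact bcode_mul_swap hτ'm (Fin.lt_def.2 hi)
    rw [swapProd_succ _ h, swapProd_congr hB, ih h.le hτ'fix, bcode_eq_inv_apply_of_le hτinv,
      hτ_eq]

theorem exists_bcodeNat_eq {c : Fin n → ℕ} (hc : ∀ i, 1 ≤ c i ∧ c i ≤ i + 1) :
    ∃ τ : Perm (Fin n), BcodeNat τ = c := by
  let d : Fin n → Fin n := fun i => ⟨c i - 1, by have := hc i; omega⟩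
  have hd : ∀ i, d i ≤ i := fun i => by have := hc i; simp only [d, Fin.le_def]; omega
  refine ⟨swapProd d n, funext fun i => ?_⟩
  rw [BcodeNat, bcode_swapProd hd le_rfl, if_pos i.2]
  have := hc i
  simp only [d]
  omega

theorem mem_lmapSet_iff {σ : Perm (Fin n)} {i : Fin n} :
    i ∈ LmapSet σ ↔ ∀ j < i, σ j < σ i := by
  simp [LmapSet]

theorem mem_lmapSet_mul_swap {σ : Perm (Fin n)} {b m : Fin n} (hσ : ∀ x, m ≤ x → σ x = x)
    (hbm : b ≤ m) (i : Fin n) :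
    i ∈ LmapSet (σ * swap b m) ↔ (i < b ∧ i ∈ LmapSet σ) ∨ i = b ∨ m < i := by
  have hσlt : ∀ x, x < m → σ x < m := fun x =>
    (Perm.apply_mem_iff_of_forall_notMem (s := Set.Iio m) fun x hx => hσ x (not_lt.1 hx)).2
  have hτb : (σ * swap b m) b = m := by simp [hσ m le_rfl]
  have hτ : ∀ x, x ≠ b → x ≠ m → (σ * swap b m) x = σ x := fun x hb hm => by
    rw [Perm.mul_apply, swap_apply_of_ne_of_ne hb hm]
  have hτle : ∀ x, x ≤ m → (σ * swap b m) x ≤ m := fun x hx => by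
    have hswap : swap b m x ≤ m := by
      rw [swap_apply_def]
      split_ifs
      exacts [le_rfl, hbm, hx]
    rw [Perm.mul_apply]
    rcases hswap.lt_or_eq with hlt | heq
    · exact (hσlt _ hlt).le
    · rw [heq, hσ m le_rfl]
  simp only [mem_lmapSet_iff]
  rcases lt_trichotomy i b with hib | rfl | hbi
  · have hagree : ∀ j ≤ i, (σ * swap b m) j = σ j := fun j hj =>
      hτ j (hj.trans_lt hib).ne ((hj.trans_lt (hib.trans_le hbm)).ne)
    simp only [hib, true_and, hib.ne, (hib.trans_le hbm).not_gt, or_false]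
    rw [hagree i le_rfl]
    exact forall₂_congr fun j hj => by rw [hagree j hj.le]
  · simp only [lt_irrefl, false_and, true_or, or_true, iff_true, hτb]
    intro j hj
    rw [hτ j hj.ne (hj.trans_le hbm).ne]
    exact hσlt j (hj.trans_le hbm)
  · simp only [hbi.not_gt, false_and, hbi.ne', false_or]
    rcases le_or_gt i m with him | hmi
    · refine iff_of_false (fun h => ?_) him.not_gt
      have hmτ := h b hbi
      rw [hτb] at hmτ
      exact hmτ.not_ge (hτle i him)
    · refine iff_of_true (fun j hj => ?_) hmi
      have hfix : ∀ x, m < x → (σ * swap b m) x = x := fun x hx => by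
        rw [hτ x (hbm.trans_lt hx).ne' hx.ne', hσ x hx.le]
      rw [hfix i hmi]
      rcases le_or_gt j m with hjm | hmj
      · exact (hτle j hjm).trans_lt hmi
      · rwa [hfix j hmj]

theorem mem_lmapSet_swapProd_iff (hd : ∀ i, d i ≤ i) (ht : t ≤ n) (i : Fin n) :
    i ∈ LmapSet (swapProd d t) ↔
      t ≤ i ∨ ∃ j : Fin n, (j : ℕ) < t ∧ d j = i ∧ ∀ k : Fin n, j < k → (k : ℕ) < t → i < d k := by
  induction t with
  | zero => simp [swapProd, mem_lmapSet_iff]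
  | succ t ih =>
    have h : t < n := by omega
    set m : Fin n := ⟨t, h⟩
    have hlast : (∃ j : Fin n, (j : ℕ) < t + 1 ∧ d j = i ∧
          ∀ k : Fin n, j < k → (k : ℕ) < t + 1 → i < d k) ↔
        d m = i ∨ (i < d m ∧
          ∃ j : Fin n, (j : ℕ) < t ∧ d j = i ∧ ∀ k : Fin n, j < k → (k : ℕ) < t → i < d k) := by
      constructor
      · rintro ⟨j, hj, hji, hk⟩
        rcases Nat.lt_succ_iff_lt_or_eq.1 hj with hjt | hjt
        · exact .inr ⟨hk m (Fin.lt_def.2 hjt) (by simp [m]), j, hjt, hji,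
            fun k hjk hkt => hk k hjk (by omega)⟩
        · exact .inl (by rwa [show m = j from Fin.ext hjt.symm])
      · rintro (hdm | ⟨hlt, j, hjt, hji, hk⟩)
        · refine ⟨m, by simp [m], hdm, fun k hmk hkt => absurd (Fin.lt_def.1 hmk) ?_⟩
          simp only [m]
          omega
        · refine ⟨j, by omega, hji, fun k hjk hkt => ?_⟩
          rcases Nat.lt_succ_iff_lt_or_eq.1 hkt with hkt | hkt
          · exact hk k hjk hkt
          · rwa [show k = m from Fin.ext hkt]
    have hdm : (d m : ℕ) ≤ t := hd m
    have hmi : m < i ↔ t + 1 ≤ (i : ℕ) := Fin.lt_def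
    have hlt : i < d m → ¬ t ≤ (i : ℕ) := fun h' => by rw [Fin.lt_def] at h'; omega
    rw [swapProd_succ d h, mem_lmapSet_mul_swap (fun x hx => swapProd_apply_of_le hd t hx) (hd m),
      ih h.le, hlast, hmi, eq_comm (a := i)]
    constructor
    · rintro (⟨hid, hti | hP⟩ | hdi | hti)
      exacts [absurd hti (hlt hid), .inr (.inr ⟨hid, hP⟩), .inr (.inl hdi), .inl hti]
    · rintro (hti | hdi | ⟨hid, hP⟩)
      exacts [.inr (.inr hti), .inr (.inl hdi), .inl ⟨hid, .inr hP⟩]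

def codeLmap (c : Fin n → ℕ) : Finset (Fin n) :=
  univ.filter fun i => ∃ j, c j = i + 1 ∧ ∀ k, j < k → (i : ℕ) + 1 < c k

theorem lmapSet_eq_codeLmap_bcodeNat (τ : Perm (Fin n)) :
    LmapSet τ = codeLmap (BcodeNat τ) := by
  have h := mem_lmapSet_swapProd_iff (bcode_le τ) le_rfl
  rw [swapProd_bcode le_rfl fun x hx => absurd x.2 (by omega)] at h
  ext i
  rw [h, codeLmap, mem_filter]
  simp only [BcodeNat, mem_univ, Fin.is_lt, i.is_lt.not_ge, true_and, true_implies, false_or,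
    Fin.ext_iff, Fin.lt_def, Nat.add_right_cancel_iff, Nat.add_lt_add_iff_right]

def Acode₀ (σ : Perm (Fin n)) (k : Fin n) : ℕ :=
  ((Iio k).filter fun j => σ⁻¹ j < σ⁻¹ k).card

theorem acode_eq_acode₀_add_one (σ : Perm (Fin n)) (k : Fin n) : Acode σ k = Acode₀ σ k + 1 := by
  rw [Acode, Leh, Acode₀, ← card_insert_of_notMem (s := (Iio k).filter _) (a := k) (by simp)]
  congr 1
  ext j
  rcases eq_or_ne j k with rfl | hjk
  · simp
  · simp [hjk, le_iff_lt_or_eq]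

theorem acode₀_le (σ : Perm (Fin n)) (k : Fin n) : Acode₀ σ k ≤ k :=
  (card_filter_le _ _).trans (Fin.card_Iio k).le

theorem acode₀_apply (σ : Perm (Fin n)) (q : Fin n) :
    Acode₀ σ (σ q) = ((Iio q).filter fun p => σ p < σ q).card := by
  refine card_nbij' (⇑σ⁻¹) σ (fun x hx => ?_) (fun x hx => ?_) (fun x _ => ?_) (fun x _ => ?_) <;>
    simp_all

theorem mem_rmilSet_iff {σ : Perm (Fin n)} {m : Fin n} :
    m ∈ RmilSet σ ↔ ∀ q, σ⁻¹ m < q → m < σ q := by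
  simp only [RmilSet, mem_image, mem_filter, mem_univ, true_and]
  exact ⟨by rintro ⟨i, hi, rfl⟩; simpa using hi, fun h => ⟨σ⁻¹ m, by simpa using h, by simp⟩⟩

theorem mem_lmilSet_iff {σ : Perm (Fin n)} {m : Fin n} :
    m ∈ LmilSet σ ↔ ∀ q, q < σ⁻¹ m → m < σ q := by
  simp only [LmilSet, mem_image, mem_filter, mem_univ, true_and]
  exact ⟨by rintro ⟨i, hi, rfl⟩; simpa using hi, fun h => ⟨σ⁻¹ m, by simpa using h, by simp⟩⟩

theorem rmilSet_eq_acode (σ : Perm (Fin n)) :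
    RmilSet σ = univ.filter fun m => Acode σ m = m + 1 := by
  ext m
  have hcard := card_filter_eq_iff (s := Iio m) (p := fun j => σ⁻¹ j < σ⁻¹ m)
  rw [Fin.card_Iio] at hcard
  rw [mem_rmilSet_iff, Perm.forall_lt_apply_iff (S := (σ⁻¹ m < ·)) (lt_irrefl _), mem_filter,
    acode_eq_acode₀_add_one, Nat.add_right_cancel_iff, Acode₀, hcard]
  simp only [mem_univ, true_and, mem_Iio]
  exact forall₂_congr fun j hj => not_lt.trans (σ⁻¹.injective.ne hj.ne).le_iff_lt

theorem lmilSet_eq_oset_acode (σ : Perm (Fin n)) : LmilSet σ = Oset (Acode σ) := by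
  ext m
  rw [mem_lmilSet_iff, Perm.forall_lt_apply_iff (S := (· < σ⁻¹ m)) (lt_irrefl _), Oset, mem_filter,
    acode_eq_acode₀_add_one, Nat.add_eq_right, Acode₀, card_filter_eq_zero_iff]
  simp

theorem acode₀_apply_le (σ : Perm (Fin n)) (q : Fin n) : Acode₀ σ (σ q) ≤ q := by
  rw [acode₀_apply]
  exact (card_filter_le _ _).trans (Fin.card_Iio q).le

theorem lt_acode₀_apply {σ : Perm (Fin n)} {i q : Fin n} (h : ∀ p ≤ i, p < q ∧ σ p < σ q) :
    (i : ℕ) < Acode₀ σ (σ q) := by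
  rw [acode₀_apply]
  calc (i : ℕ) < (Iic i).card := by simp
    _ ≤ _ := card_le_card fun p hp => by simpa using h p (mem_Iic.1 hp)

theorem mem_lmapSet_iff_acode₀ {σ : Perm (Fin n)} {i : Fin n} :
    i ∈ LmapSet σ ↔ ∃ j, Acode₀ σ j = i ∧ ∀ k, j < k → (i : ℕ) < Acode₀ σ k := by
  rw [mem_lmapSet_iff]
  constructor
  · intro hi
    have hle : ∀ p ≤ i, σ p ≤ σ i := fun p hp =>
      hp.lt_or_eq.elim (fun h => (hi p h).le) fun h => h ▸ le_rfl
    refine ⟨σ i, ?_, fun k hk => ?_⟩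
    · rw [acode₀_apply, card_filter_eq_iff.2 fun p hp => hi p (mem_Iio.1 hp), Fin.card_Iio]
    · obtain ⟨q, rfl⟩ := σ.surjective k
      exact lt_acode₀_apply fun p hp =>
        ⟨lt_of_not_ge fun hqp => (hle q (hqp.trans hp)).not_gt hk, (hle p hp).trans_lt hk⟩
  · rintro ⟨j, hj, hk⟩
    obtain ⟨q, rfl⟩ := σ.surjective j
    -- A larger letter at a place `p ≤ i` would have A-code at most `p ≤ i`.
    have hsmall : ∀ p ≤ i, σ p ≤ σ q := fun p hp => not_lt.1 fun hlt => by
      have := hk _ hlt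
      have := acode₀_apply_le σ p
      have := Fin.le_def.1 hp
      omega
    have hqi : q ≤ i := not_lt.1 fun hiq => (lt_acode₀_apply fun p hp =>
      ⟨hp.trans_lt hiq, (hsmall p hp).lt_of_ne (σ.injective.ne (hp.trans_lt hiq).ne)⟩).ne' hj
    have hiq : i ≤ q := Fin.le_def.2 (hj ▸ acode₀_apply_le σ q)
    obtain rfl := le_antisymm hqi hiq
    exact fun p hp => (hsmall p hp.le).lt_of_ne (σ.injective.ne hp.ne)

theorem lmapSet_eq_codeLmap_acode (σ : Perm (Fin n)) : LmapSet σ = codeLmap (Acode σ) := by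
  ext i
  simp only [mem_lmapSet_iff_acode₀, codeLmap, mem_filter, mem_univ, true_and,
    acode_eq_acode₀_add_one, Nat.add_right_cancel_iff, Nat.add_lt_add_iff_right]

theorem card_filter_lt_inv_apply (σ : Perm (Fin n)) (m : Fin n) :
    ((univ.filter fun p => σ p ≤ m).filter (· < σ⁻¹ m)).card = Acode₀ σ m := by
  have h := acode₀_apply σ (σ⁻¹ m)
  simp only [Perm.coe_inv, apply_symm_apply] at h
  rw [h]
  congr 1
  ext p
  simp only [mem_filter, mem_univ, true_and, mem_Iio]
  exact ⟨fun ⟨h1, h2⟩ => ⟨h2, h1.lt_of_ne fun h => h2.ne (by simp [← h])⟩,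
    fun ⟨h2, h1⟩ => ⟨h1.le, h2⟩⟩

theorem inducedAux_acode (σ : Perm (Fin n)) {t : ℕ} (ht : t ≤ n) :
    inducedAux ((List.finRange n).take t).reverse (univ.filter fun p => (σ p : ℕ) < t) (Acode σ) =
      univ.filter fun q : Fin n × Fin n => q.1 < q.2 ∧ σ q.2 < σ q.1 ∧ (σ q.1 : ℕ) < t := by
  induction t with
  | zero => simp [inducedAux]
  | succ t ih =>
    have h : t < n := by omega
    set m : Fin n := ⟨t, h⟩
    have hlist : ((List.finRange n).take (t + 1)).reverse =
        m :: ((List.finRange n).take t).reverse := by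
      simp [List.take_add_one, m, h]
    have hσm : ∀ p, σ p = m ↔ p = σ⁻¹ m := fun p => Perm.eq_inv_iff_eq.symm
    set S := univ.filter fun p => (σ p : ℕ) < t + 1
    have hmS : σ⁻¹ m ∈ S := by simp [S, m]
    have hpivot : (S.sort (· ≤ ·)).getD (Acode σ m - 1) m = σ⁻¹ m := by
      have hS : S = univ.filter fun p => σ p ≤ m := by
        ext p
        simp only [S, mem_filter, mem_univ, true_and, Fin.le_def, m]
        omega
      rw [acode_eq_acode₀_add_one, Nat.add_sub_cancel, ← card_filter_lt_inv_apply, ← hS]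
      exact Finset.sort_getD_card_filter_lt hmS m
    have herase : S.erase (σ⁻¹ m) = univ.filter fun p => (σ p : ℕ) < t := by
      ext p
      simp only [S, mem_erase, mem_filter, mem_univ, true_and, ne_eq, ← hσm, Fin.ext_iff, m]
      omega
    rw [hlist, inducedAux, hpivot, herase, ih h.le]
    ext ⟨q₁, q₂⟩
    simp only [S, mem_union, mem_image, mem_filter, mem_univ, true_and, Prod.mk.injEq]
    constructor
    · rintro (⟨j, ⟨hj, hmj⟩, rfl, rfl⟩ | ⟨h1, h2, h3⟩)
      · have hjm : (σ j : ℕ) ≠ t := fun hjt => hmj.ne' ((hσm j).1 (Fin.ext hjt))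
        simp only [Perm.coe_inv, apply_symm_apply, Fin.lt_def]
        exact ⟨hmj, by simp only [m]; omega, by simp only [m]; omega⟩
      · exact ⟨h1, h2, by omega⟩
    · rintro ⟨h1, h2, h3⟩
      by_cases hq : (σ q₁ : ℕ) = t
      · have hq₁ : q₁ = σ⁻¹ m := (hσm q₁).1 (Fin.ext hq)
        subst hq₁
        refine .inl ⟨q₂, ⟨?_, h1⟩, rfl, rfl⟩
        have := Fin.lt_def.1 h2
        omega
      · exact .inr ⟨h1, h2, by omega⟩

theorem induced_acode (σ : Perm (Fin n)) : induced (Acode σ) = InvSet σ := by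
  have h := inducedAux_acode σ le_rfl
  simp only [List.take_of_length_le (List.length_finRange.le), Fin.is_lt, filter_true,
    and_true] at h
  rw [induced, h, InvSet]

theorem bcodeNat_phi (σ : Perm (Fin n)) : BcodeNat (phi σ) = Acode σ :=
  Function.invFun_eq <| exists_bcodeNat_eq fun i => by
    have := acode₀_le σ i
    rw [acode_eq_acode₀_add_one]
    omega

end SortIdx

/-- Theorem 1.3(1).
`(Inv, Rmil, Lmap, Lmil) σ = (Sor, Cyc, Lmap, Lmic₁) (φ σ)`. -/
theorem inv_rmil_lmap_lmil_eq_phi (n : ℕ) (σ : Equiv.Perm (Fin n)) :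
    SortIdx.InvSet σ = SortIdx.SorSet (SortIdx.phi σ) ∧
    SortIdx.RmilSet σ = SortIdx.CycSet (SortIdx.phi σ) ∧
    SortIdx.LmapSet σ = SortIdx.LmapSet (SortIdx.phi σ) ∧
    SortIdx.LmilSet σ = SortIdx.Lmic1Set (SortIdx.phi σ) := by
  have hB := SortIdx.bcodeNat_phi σ
  refine ⟨?_, ?_, ?_, ?_⟩
  · rw [SortIdx.SorSet, hB, SortIdx.induced_acode]
  · rw [SortIdx.rmilSet_eq_acode, SortIdx.cycSet_eq_bcodeNat, hB]
  · rw [SortIdx.lmapSet_eq_codeLmap_acode, SortIdx.lmapSet_eq_codeLmap_bcodeNat, hB]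
  · rw [SortIdx.lmilSet_eq_oset_acode, SortIdx.Lmic1Set, hB]
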